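/- arXiv:1705.10079 — 2 statements merged into one kernel-verified Lean document; each statement's English description precedes it below -/
import Mathlib

section
/- Let 0 < a < b, ρ > 0, n ∈ ℕ, and α with n−1 < α < n. For every x : [a,b] → ℝ of class C^n and every t ∈ [a,b], one has |(ᶜD_{a+}^{α,ρ} x)(t)| ≤ (ρ^{α−n}/Γ(n+1−α)) · (max_{τ∈[a,t]} |x_(n)(τ)|) · (t^ρ − a^ρ)^{n−α}. In particular (ᶜD_{a+}^{α,ρ} x)(a) = 0. -/
/-! The kernel `τ^(ρ-1) (t^ρ - τ^ρ)^(β-1)` of the Caputo–Katugampola derivative, `β = n - α`, is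
nonnegative with primitive `-(t^ρ - τ^ρ)^β / (ρ β)`, so its integral over `[a, t]` is
`(t^ρ - a^ρ)^β / (ρ β)`. Bounding `x_(n)` by its supremum (finite, since `x_(n)` agrees on `(a, b)`
with a function continuous on `[a, b]`) and using `β Γ(β) = Γ(β + 1)` gives the estimate. -/

open MeasureTheory intervalIntegral Set Filter

/-- The iterated operator `(t^{1-ρ} d/dt)^k` applied to `x`. -/
noncomputable def iterD (ρ : ℝ) (x : ℝ → ℝ) : ℕ → ℝ → ℝ
  | 0 => x
  | k + 1 => fun t => t ^ (1 - ρ) * deriv (iterD ρ x k) t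

/-- The iterated operator `(-t^{1-ρ} d/dt)^k` applied to `x`. -/
noncomputable def iterDNeg (ρ : ℝ) (x : ℝ → ℝ) : ℕ → ℝ → ℝ
  | 0 => x
  | k + 1 => fun t => -(t ^ (1 - ρ)) * deriv (iterDNeg ρ x k) t

/-- Left-sided Katugampola fractional integral of order `β` and parameter `ρ`. -/
noncomputable def katIntLeft (a ρ β : ℝ) (x : ℝ → ℝ) (t : ℝ) : ℝ :=
  ρ ^ (1 - β) / Real.Gamma β * ∫ τ in a..t, τ ^ (ρ - 1) * (t ^ ρ - τ ^ ρ) ^ (β - 1) * x τ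

/-- Right-sided Katugampola fractional integral of order `β` and parameter `ρ`. -/
noncomputable def katIntRight (b ρ β : ℝ) (x : ℝ → ℝ) (t : ℝ) : ℝ :=
  ρ ^ (1 - β) / Real.Gamma β * ∫ τ in t..b, τ ^ (ρ - 1) * (τ ^ ρ - t ^ ρ) ^ (β - 1) * x τ

/-- Left-sided Caputo–Katugampola fractional derivative of order `α ∈ (n-1, n)`. -/
noncomputable def caputoKatLeft (a ρ α : ℝ) (n : ℕ) (x : ℝ → ℝ) (t : ℝ) : ℝ :=
  ρ ^ (1 - (n : ℝ) + α) / Real.Gamma ((n : ℝ) - α) *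
    ∫ τ in a..t, τ ^ (ρ - 1) * (t ^ ρ - τ ^ ρ) ^ ((n : ℝ) - α - 1) * iterD ρ x n τ

/-- Right-sided Caputo–Katugampola fractional derivative of order `α ∈ (n-1, n)`. -/
noncomputable def caputoKatRight (b ρ α : ℝ) (n : ℕ) (x : ℝ → ℝ) (t : ℝ) : ℝ :=
  ρ ^ (1 - (n : ℝ) + α) / Real.Gamma ((n : ℝ) - α) *
    ∫ τ in t..b, τ ^ (ρ - 1) * (τ ^ ρ - t ^ ρ) ^ ((n : ℝ) - α - 1) *
      ((-1 : ℝ) ^ n * iterD ρ x n τ)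

/-- Left-sided (Riemann–Liouville type) Katugampola fractional derivative. -/
noncomputable def katDerivLeft (a ρ α : ℝ) (n : ℕ) (x : ℝ → ℝ) (t : ℝ) : ℝ :=
  iterD ρ (katIntLeft a ρ ((n : ℝ) - α) x) n t

/-- Right-sided (Riemann–Liouville type) Katugampola fractional derivative. -/
noncomputable def katDerivRight (b ρ α : ℝ) (n : ℕ) (x : ℝ → ℝ) (t : ℝ) : ℝ :=
  iterDNeg ρ (katIntRight b ρ ((n : ℝ) - α) x) n t

/-- The Mittag-Leffler function `E_α(t) = Σ_{k≥0} t^k / Γ(αk+1)`. -/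
noncomputable def mittagLeffler (α t : ℝ) : ℝ := ∑' k : ℕ, t ^ k / Real.Gamma (α * k + 1)

section KatugampolaKernel

noncomputable def katKernel (ρ β t τ : ℝ) : ℝ := τ ^ (ρ - 1) * (t ^ ρ - τ ^ ρ) ^ (β - 1)

variable {a t ρ β : ℝ}

theorem hasDerivAt_neg_sub_rpow_rpow_div (hρ : 0 < ρ) (hβ : β ≠ 0) {τ : ℝ} (hτ : 0 < τ)
    (hτt : τ < t) :
    HasDerivAt (fun s => -(t ^ ρ - s ^ ρ) ^ β / (ρ * β)) (katKernel ρ β t τ) τ := by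
  have hpos : 0 < t ^ ρ - τ ^ ρ := sub_pos.mpr (Real.rpow_lt_rpow hτ.le hτt hρ)
  have h := (((Real.hasDerivAt_rpow_const (p := ρ) (Or.inl hτ.ne')).const_sub (t ^ ρ)).rpow_const
    (p := β) (Or.inl hpos.ne')).neg.div_const (ρ * β)
  refine h.congr_deriv ?_
  rw [katKernel]
  field_simp

theorem continuous_neg_sub_rpow_rpow_div (hρ : 0 < ρ) (hβ : 0 < β) :
    Continuous (fun s : ℝ => -(t ^ ρ - s ^ ρ) ^ β / (ρ * β)) :=
  ((continuous_const.sub (continuous_id.rpow_const fun _ => Or.inr hρ.le)).rpow_const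
    fun _ => Or.inr hβ.le).neg.div_const _

theorem katKernel_nonneg (hρ : 0 < ρ) {τ : ℝ} (hτ : 0 ≤ τ) (hτt : τ ≤ t) :
    0 ≤ katKernel ρ β t τ :=
  mul_nonneg (Real.rpow_nonneg hτ _)
    (Real.rpow_nonneg (sub_nonneg.mpr (Real.rpow_le_rpow hτ hτt hρ.le)) _)

theorem intervalIntegrable_katKernel (ha : 0 ≤ a) (hat : a ≤ t) (hρ : 0 < ρ) (hβ : 0 < β) :
    IntervalIntegrable (katKernel ρ β t) volume a t :=
  (intervalIntegrable_iff_integrableOn_Ioc_of_le hat).mpr <|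
    integrableOn_deriv_of_nonneg (continuous_neg_sub_rpow_rpow_div hρ hβ).continuousOn
      (fun _ hτ => hasDerivAt_neg_sub_rpow_rpow_div hρ hβ.ne' (ha.trans_lt hτ.1) hτ.2)
      fun _ hτ => katKernel_nonneg hρ (ha.trans hτ.1.le) hτ.2.le

theorem integral_katKernel (ha : 0 ≤ a) (hat : a ≤ t) (hρ : 0 < ρ) (hβ : 0 < β) :
    ∫ τ in a..t, katKernel ρ β t τ = (t ^ ρ - a ^ ρ) ^ β / (ρ * β) := by
  rw [integral_eq_sub_of_hasDerivAt_of_le hat (continuous_neg_sub_rpow_rpow_div hρ hβ).continuousOn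
    (fun τ hτ => hasDerivAt_neg_sub_rpow_rpow_div hρ hβ.ne' (ha.trans_lt hτ.1) hτ.2)
    (intervalIntegrable_katKernel ha hat hρ hβ)]
  simp only [sub_self, Real.zero_rpow hβ.ne']
  ring

theorem abs_integral_katKernel_mul_le (ha : 0 ≤ a) (hat : a ≤ t) (hρ : 0 < ρ) (hβ : 0 < β)
    {f : ℝ → ℝ} {M : ℝ} (hf : ∀ τ ∈ Icc a t, |f τ| ≤ M) :
    |∫ τ in a..t, katKernel ρ β t τ * f τ| ≤ M * ((t ^ ρ - a ^ ρ) ^ β / (ρ * β)) := by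
  rw [← integral_katKernel ha hat hρ hβ, ← intervalIntegral.integral_const_mul, ← Real.norm_eq_abs]
  refine norm_integral_le_of_norm_le hat (ae_of_all _ fun τ hτ => ?_)
    ((intervalIntegrable_katKernel ha hat hρ hβ).const_mul M)
  have hk := katKernel_nonneg (β := β) hρ (ha.trans hτ.1.le) hτ.2
  rw [norm_mul, Real.norm_of_nonneg hk, Real.norm_eq_abs, mul_comm M]
  exact mul_le_mul_of_nonneg_left (hf τ (Ioc_subset_Icc_self hτ)) hk

end KatugampolaKernel

section IterD

variable {a b ρ : ℝ} {x : ℝ → ℝ}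

theorem exists_contDiffOn_eqOn_iterD (ha : 0 < a) (hab : a < b) (k m : ℕ)
    (hx : ContDiffOn ℝ (k + m : ℕ) x (Icc a b)) :
    ∃ g, ContDiffOn ℝ m g (Icc a b) ∧ EqOn (iterD ρ x k) g (Ioo a b) := by
  induction k generalizing m with
  | zero => exact ⟨x, by simpa using hx, fun _ _ => rfl⟩
  | succ k ih =>
    obtain ⟨g, hg, hxg⟩ := ih (m + 1) (by rwa [← add_assoc, add_right_comm])
    refine ⟨fun τ => τ ^ (1 - ρ) * derivWithin g (Icc a b) τ, ?_, fun τ hτ => ?_⟩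
    · have hpow : ContDiffOn ℝ m (fun τ : ℝ => τ ^ (1 - ρ)) (Icc a b) := fun τ hτ =>
        (Real.contDiffAt_rpow_const_of_ne (ha.trans_le hτ.1).ne').contDiffWithinAt
      exact hpow.mul (hg.derivWithin (uniqueDiffOn_Icc hab) (by push_cast; rfl))
    · have hderiv : deriv (iterD ρ x k) τ = deriv g τ :=
        (eventuallyEq_of_mem (isOpen_Ioo.mem_nhds hτ) hxg).deriv_eq
      simp only [iterD, hderiv, derivWithin_of_mem_nhds (Icc_mem_nhds hτ.1 hτ.2)]

theorem bddAbove_abs_iterD (ha : 0 < a) (hab : a < b) {n : ℕ}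
    (hx : ContDiffOn ℝ n x (Icc a b)) :
    BddAbove ((fun τ => |iterD ρ x n τ|) '' Icc a b) := by
  obtain ⟨g, hg, hxg⟩ := exists_contDiffOn_eqOn_iterD (ρ := ρ) ha hab n 0 (by simpa using hx)
  have hcompact : BddAbove ((fun τ => |g τ|) '' Icc a b) :=
    isCompact_Icc.bddAbove_image hg.continuousOn.abs
  -- `deriv` at `a` and `b` sees `x` outside `[a, b]`, so the endpoints are handled separately.
  have hends : BddAbove {|iterD ρ x n a|, |iterD ρ x n b|} := (toFinite _).bddAbove
  refine (hcompact.union hends).mono ?_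
  rintro _ ⟨τ, hτ, rfl⟩
  rcases eq_endpoints_or_mem_Ioo_of_mem_Icc hτ with rfl | rfl | hτ'
  · exact Or.inr (mem_insert _ _)
  · exact Or.inr (mem_insert_of_mem _ rfl)
  · exact Or.inl ⟨τ, hτ, congrArg abs (hxg hτ').symm⟩

end IterD

theorem abs_caputoKatLeft_le_general
    (a b ρ α : ℝ) (n : ℕ) (ha : 0 < a) (hab : a < b) (hρ : 0 < ρ)
    (hα₂ : α < n)
    (x : ℝ → ℝ) (hx : ContDiffOn ℝ n x (Set.Icc a b))
    (t : ℝ) (ht : t ∈ Set.Icc a b) :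
    |caputoKatLeft a ρ α n x t| ≤
      ρ ^ (α - (n : ℝ)) / Real.Gamma ((n : ℝ) + 1 - α) *
        sSup ((fun τ => |iterD ρ x n τ|) '' Set.Icc a t) *
        (t ^ ρ - a ^ ρ) ^ ((n : ℝ) - α) ∧
    caputoKatLeft a ρ α n x a = 0 := by
  have hβ : 0 < (n : ℝ) - α := sub_pos.mpr hα₂
  refine ⟨?_, by simp [caputoKatLeft]⟩
  set M := sSup ((fun τ => |iterD ρ x n τ|) '' Icc a t)
  have hM : ∀ τ ∈ Icc a t, |iterD ρ x n τ| ≤ M := fun τ hτ =>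
    le_csSup ((bddAbove_abs_iterD ha hab hx).mono (image_mono (Icc_subset_Icc_right ht.2)))
      (mem_image_of_mem _ hτ)
  have hΓ : Real.Gamma ((n : ℝ) + 1 - α) = ((n : ℝ) - α) * Real.Gamma ((n : ℝ) - α) := by
    rw [add_sub_right_comm, Real.Gamma_add_one hβ.ne']
  have hρpow : ρ ^ (1 - (n : ℝ) + α) = ρ ^ (α - (n : ℝ)) * ρ := by
    rw [← Real.rpow_add_one hρ.ne']
    ring_nf
  have hC : 0 ≤ ρ ^ (1 - (n : ℝ) + α) / Real.Gamma ((n : ℝ) - α) := by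
    have := Real.Gamma_pos_of_pos hβ
    positivity
  rw [caputoKatLeft, abs_mul, abs_of_nonneg hC]
  calc _ ≤ ρ ^ (1 - (n : ℝ) + α) / Real.Gamma ((n : ℝ) - α) *
        (M * ((t ^ ρ - a ^ ρ) ^ ((n : ℝ) - α) / (ρ * ((n : ℝ) - α)))) :=
        mul_le_mul_of_nonneg_left (abs_integral_katKernel_mul_le ha.le ht.1 hρ hβ hM) hC
    _ = _ := by
      rw [hΓ, hρpow]
      field_simp

theorem abs_caputoKatLeft_le
    (a b ρ α : ℝ) (n : ℕ) (ha : 0 < a) (hab : a < b) (hρ : 0 < ρ)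
    (hα₁ : (n : ℝ) - 1 < α) (hα₂ : α < n)
    (x : ℝ → ℝ) (hx : ContDiffOn ℝ n x (Set.Icc a b))
    (t : ℝ) (ht : t ∈ Set.Icc a b) :
    |caputoKatLeft a ρ α n x t| ≤
      ρ ^ (α - (n : ℝ)) / Real.Gamma ((n : ℝ) + 1 - α) *
        sSup ((fun τ => |iterD ρ x n τ|) '' Set.Icc a t) *
        (t ^ ρ - a ^ ρ) ^ ((n : ℝ) - α) ∧
    caputoKatLeft a ρ α n x a = 0 :=
  abs_caputoKatLeft_le_general a b ρ α n ha hab hρ hα₂ x hx t ht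
end

section
/- Let 0 < a < b, ρ > 0, n ∈ ℕ, α with n−1 < α < n, and set K = (ρ^{α−n}/Γ(n+1−α)) (b^ρ − a^ρ)^{n−α}. Then for every x : [a,b] → ℝ of class C^n, one has ‖ᶜD_{a+}^{α,ρ} x‖_C ≤ K · ‖x‖_{C^n}^ρ and ‖ᶜD_{b−}^{α,ρ} x‖_C ≤ K · ‖x‖_{C^n}^ρ; that is, the left- and right-sided Caputo–Katugampola fractional derivatives are bounded operators from C^n[a,b] to C[a,b]. -/
open MeasureTheory intervalIntegral Set Filter

/-!
With `β = n - α`, both Caputo–Katugampola derivatives are Katugampola fractional integrals of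
order `β` of `± x_(n)`. Their kernel `τ^(ρ-1) (t^ρ - τ^ρ)^(β-1)` is nonnegative with primitive
`-(t^ρ - τ^ρ)^β / (ρβ)`, hence integrable with integral `(t^ρ - a^ρ)^β / (ρβ)`, and
`ρ^(1-β) / Γ(β) · (b^ρ - a^ρ)^β / (ρβ) = K`. So both derivatives are bounded by
`K · ‖x_(n)‖_C ≤ K · ‖x‖_{C^n}^ρ`.
-/

theorem intervalIntegrable_and_integral_eq_of_hasDerivAt_of_nonneg {f f' : ℝ → ℝ} {a b : ℝ}
    (hab : a ≤ b) (hcont : ContinuousOn f (Icc a b))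
    (hderiv : ∀ x ∈ Ioo a b, HasDerivAt f (f' x) x) (hpos : ∀ x ∈ Ioo a b, 0 ≤ f' x) :
    IntervalIntegrable f' volume a b ∧ ∫ x in a..b, f' x = f b - f a := by
  have hint : IntervalIntegrable f' volume a b := by
    refine intervalIntegrable_deriv_of_nonneg (uIcc_of_le hab ▸ hcont) ?_ ?_ <;>
      simpa only [min_eq_left hab, max_eq_right hab]
  exact ⟨hint, integral_eq_sub_of_hasDerivAt_of_le hab hcont hderiv hint⟩

section KatugampolaKernel

variable {ρ β s u : ℝ}

theorem intervalIntegrable_and_integral_katIntLeft_kernel (hs : 0 < s) (hsu : s ≤ u) (hρ : 0 < ρ) (hβ : 0 < β) :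
    IntervalIntegrable (fun τ => τ ^ (ρ - 1) * (u ^ ρ - τ ^ ρ) ^ (β - 1)) volume s u ∧
      ∫ τ in s..u, τ ^ (ρ - 1) * (u ^ ρ - τ ^ ρ) ^ (β - 1) = (u ^ ρ - s ^ ρ) ^ β / (ρ * β) := by
  have hderiv : ∀ τ ∈ Ioo s u, HasDerivAt (fun τ => -(u ^ ρ - τ ^ ρ) ^ β / (ρ * β))
      (τ ^ (ρ - 1) * (u ^ ρ - τ ^ ρ) ^ (β - 1)) τ := by
    intro τ hτ
    have hτ0 : 0 < τ := hs.trans hτ.1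
    have hpos : 0 < u ^ ρ - τ ^ ρ := sub_pos.2 (Real.rpow_lt_rpow hτ0.le hτ.2 hρ)
    refine ((((Real.hasDerivAt_rpow_const (Or.inl hτ0.ne')).const_sub (u ^ ρ)).rpow_const
      (Or.inl hpos.ne')).neg.div_const (ρ * β)).congr_deriv ?_
    field_simp
  have hcont : ContinuousOn (fun τ => -(u ^ ρ - τ ^ ρ) ^ β / (ρ * β)) (Icc s u) := by
    refine ((ContinuousOn.rpow_const ?_ fun _ _ => Or.inr hβ.le).neg).div_const _
    exact continuousOn_const.sub fun τ hτ =>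
      (Real.continuousAt_rpow_const τ ρ (Or.inl (hs.trans_le hτ.1).ne')).continuousWithinAt
  have hpos : ∀ τ ∈ Ioo s u, 0 ≤ τ ^ (ρ - 1) * (u ^ ρ - τ ^ ρ) ^ (β - 1) := fun τ hτ =>
    mul_nonneg (Real.rpow_nonneg (hs.trans hτ.1).le _)
      (Real.rpow_nonneg (sub_nonneg.2 (Real.rpow_le_rpow (hs.trans hτ.1).le hτ.2.le hρ.le)) _)
  obtain ⟨hint, heq⟩ :=
    intervalIntegrable_and_integral_eq_of_hasDerivAt_of_nonneg hsu hcont hderiv hpos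
  refine ⟨hint, heq.trans ?_⟩
  simp only [sub_self, Real.zero_rpow hβ.ne']
  ring

theorem intervalIntegrable_and_integral_katIntRight_kernel (hs : 0 < s) (hsu : s ≤ u) (hρ : 0 < ρ) (hβ : 0 < β) :
    IntervalIntegrable (fun τ => τ ^ (ρ - 1) * (τ ^ ρ - s ^ ρ) ^ (β - 1)) volume s u ∧
      ∫ τ in s..u, τ ^ (ρ - 1) * (τ ^ ρ - s ^ ρ) ^ (β - 1) = (u ^ ρ - s ^ ρ) ^ β / (ρ * β) := by
  have hderiv : ∀ τ ∈ Ioo s u, HasDerivAt (fun τ => (τ ^ ρ - s ^ ρ) ^ β / (ρ * β))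
      (τ ^ (ρ - 1) * (τ ^ ρ - s ^ ρ) ^ (β - 1)) τ := by
    intro τ hτ
    have hτ0 : 0 < τ := hs.trans hτ.1
    have hpos : 0 < τ ^ ρ - s ^ ρ := sub_pos.2 (Real.rpow_lt_rpow hs.le hτ.1 hρ)
    refine ((((Real.hasDerivAt_rpow_const (Or.inl hτ0.ne')).sub_const (s ^ ρ)).rpow_const
      (Or.inl hpos.ne')).div_const (ρ * β)).congr_deriv ?_
    field_simp
  have hcont : ContinuousOn (fun τ => (τ ^ ρ - s ^ ρ) ^ β / (ρ * β)) (Icc s u) := by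
    refine (ContinuousOn.rpow_const ?_ fun _ _ => Or.inr hβ.le).div_const _
    exact ContinuousOn.sub (fun τ hτ => (Real.continuousAt_rpow_const τ ρ
      (Or.inl (hs.trans_le hτ.1).ne')).continuousWithinAt) continuousOn_const
  have hpos : ∀ τ ∈ Ioo s u, 0 ≤ τ ^ (ρ - 1) * (τ ^ ρ - s ^ ρ) ^ (β - 1) := fun τ hτ =>
    mul_nonneg (Real.rpow_nonneg (hs.trans hτ.1).le _)
      (Real.rpow_nonneg (sub_nonneg.2 (Real.rpow_le_rpow hs.le hτ.1.le hρ.le)) _)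
  obtain ⟨hint, heq⟩ :=
    intervalIntegrable_and_integral_eq_of_hasDerivAt_of_nonneg hsu hcont hderiv hpos
  refine ⟨hint, heq.trans ?_⟩
  simp only [sub_self, Real.zero_rpow hβ.ne']
  ring

end KatugampolaKernel

theorem abs_intervalIntegral_mul_le {k f : ℝ → ℝ} {a b M : ℝ} (hab : a ≤ b)
    (hk : IntervalIntegrable k volume a b) (hk0 : ∀ τ ∈ Ioc a b, 0 ≤ k τ)
    (hf : ∀ τ ∈ Ioc a b, |f τ| ≤ M) :
    |∫ τ in a..b, k τ * f τ| ≤ (∫ τ in a..b, k τ) * M := by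
  rw [← Real.norm_eq_abs, ← intervalIntegral.integral_mul_const]
  refine norm_integral_le_of_norm_le hab (ae_of_all _ fun τ hτ => ?_) (hk.mul_const M)
  rw [Real.norm_eq_abs, abs_mul, abs_of_nonneg (hk0 τ hτ)]
  exact mul_le_mul_of_nonneg_left (hf τ hτ) (hk0 τ hτ)

theorem rpow_one_sub_div_Gamma_mul_div {ρ β : ℝ} (hρ : 0 < ρ) (hβ : 0 < β) (X : ℝ) :
    ρ ^ (1 - β) / Real.Gamma β * (X / (ρ * β)) = ρ ^ (-β) / Real.Gamma (β + 1) * X := by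
  rw [Real.Gamma_add_one hβ.ne', sub_eq_add_neg, Real.rpow_add hρ, Real.rpow_one]
  have := (Real.Gamma_pos_of_pos hβ).ne'
  field_simp

section KatugampolaIntegral

variable {a b ρ β M t : ℝ} {f : ℝ → ℝ}

theorem abs_katIntLeft_le (ha : 0 < a) (hρ : 0 < ρ) (hβ : 0 < β)
    (hf : ∀ τ ∈ Icc a b, |f τ| ≤ M) (ht : t ∈ Icc a b) :
    |katIntLeft a ρ β f t| ≤ ρ ^ (-β) / Real.Gamma (β + 1) * (b ^ ρ - a ^ ρ) ^ β * M := by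
  obtain ⟨hint, hval⟩ := intervalIntegrable_and_integral_katIntLeft_kernel ha ht.1 hρ hβ
  have hM : 0 ≤ M := (abs_nonneg _).trans (hf t ht)
  have hc : 0 < ρ ^ (1 - β) / Real.Gamma β :=
    div_pos (Real.rpow_pos_of_pos hρ _) (Real.Gamma_pos_of_pos hβ)
  have hI := abs_intervalIntegral_mul_le (f := f) (M := M) ht.1 hint
    (fun τ hτ => mul_nonneg (Real.rpow_nonneg (ha.trans hτ.1).le _)
      (Real.rpow_nonneg (sub_nonneg.2 (Real.rpow_le_rpow (ha.trans hτ.1).le hτ.2 hρ.le)) _))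
    (fun τ hτ => hf τ ⟨hτ.1.le, hτ.2.trans ht.2⟩)
  rw [hval] at hI
  calc |katIntLeft a ρ β f t|
      = ρ ^ (1 - β) / Real.Gamma β *
          |∫ τ in a..t, τ ^ (ρ - 1) * (t ^ ρ - τ ^ ρ) ^ (β - 1) * f τ| := by
        rw [katIntLeft, abs_mul, abs_of_pos hc]
    _ ≤ ρ ^ (1 - β) / Real.Gamma β * ((t ^ ρ - a ^ ρ) ^ β / (ρ * β) * M) := by gcongr
    _ = ρ ^ (-β) / Real.Gamma (β + 1) * (t ^ ρ - a ^ ρ) ^ β * M := by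
        rw [← mul_assoc, rpow_one_sub_div_Gamma_mul_div hρ hβ]
    _ ≤ ρ ^ (-β) / Real.Gamma (β + 1) * (b ^ ρ - a ^ ρ) ^ β * M := by
        have hat : a ^ ρ ≤ t ^ ρ := Real.rpow_le_rpow ha.le ht.1 hρ.le
        gcongr
        · exact (ha.trans_le ht.1).le
        · exact ht.2

theorem abs_katIntRight_le (ha : 0 < a) (hρ : 0 < ρ) (hβ : 0 < β)
    (hf : ∀ τ ∈ Icc a b, |f τ| ≤ M) (ht : t ∈ Icc a b) :
    |katIntRight b ρ β f t| ≤ ρ ^ (-β) / Real.Gamma (β + 1) * (b ^ ρ - a ^ ρ) ^ β * M := by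
  have ht0 : 0 < t := ha.trans_le ht.1
  obtain ⟨hint, hval⟩ := intervalIntegrable_and_integral_katIntRight_kernel ht0 ht.2 hρ hβ
  have hM : 0 ≤ M := (abs_nonneg _).trans (hf t ht)
  have hc : 0 < ρ ^ (1 - β) / Real.Gamma β :=
    div_pos (Real.rpow_pos_of_pos hρ _) (Real.Gamma_pos_of_pos hβ)
  have hI := abs_intervalIntegral_mul_le (f := f) (M := M) ht.2 hint
    (fun τ hτ => mul_nonneg (Real.rpow_nonneg (ht0.trans hτ.1).le _)
      (Real.rpow_nonneg (sub_nonneg.2 (Real.rpow_le_rpow ht0.le hτ.1.le hρ.le)) _))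
    (fun τ hτ => hf τ ⟨ht.1.trans hτ.1.le, hτ.2⟩)
  rw [hval] at hI
  calc |katIntRight b ρ β f t|
      = ρ ^ (1 - β) / Real.Gamma β *
          |∫ τ in t..b, τ ^ (ρ - 1) * (τ ^ ρ - t ^ ρ) ^ (β - 1) * f τ| := by
        rw [katIntRight, abs_mul, abs_of_pos hc]
    _ ≤ ρ ^ (1 - β) / Real.Gamma β * ((b ^ ρ - t ^ ρ) ^ β / (ρ * β) * M) := by gcongr
    _ = ρ ^ (-β) / Real.Gamma (β + 1) * (b ^ ρ - t ^ ρ) ^ β * M := by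
        rw [← mul_assoc, rpow_one_sub_div_Gamma_mul_div hρ hβ]
    _ ≤ ρ ^ (-β) / Real.Gamma (β + 1) * (b ^ ρ - a ^ ρ) ^ β * M := by
        have htb : t ^ ρ ≤ b ^ ρ := Real.rpow_le_rpow ht0.le ht.2 hρ.le
        gcongr
        exact ht.1

end KatugampolaIntegral

section IteratedDerivative

variable {ρ : ℝ} {s : Set ℝ} {x : ℝ → ℝ}

/-- `iterD` with `deriv` replaced by `derivWithin _ s`. At the endpoints of `[a, b]` the full
derivatives in `iterD` are junk; this variant agrees with `iterD` on the interior and stays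
continuous up to the endpoints. -/
noncomputable def iterDWithin (ρ : ℝ) (s : Set ℝ) (x : ℝ → ℝ) : ℕ → ℝ → ℝ
  | 0 => x
  | k + 1 => fun t => t ^ (1 - ρ) * derivWithin (iterDWithin ρ s x k) s t

theorem iterD_eq_iterDWithin {t : ℝ} (k : ℕ) (ht : t ∈ interior s) :
    iterD ρ x k t = iterDWithin ρ s x k t := by
  induction k generalizing t with
  | zero => rfl
  | succ k ih =>
    simp only [iterD, iterDWithin, derivWithin_of_mem_nhds (mem_interior_iff_mem_nhds.1 ht)]
    congr 1
    exact Filter.EventuallyEq.deriv_eq <|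
      eventually_of_mem (isOpen_interior.mem_nhds ht) fun _ => ih

theorem contDiffOn_iterDWithin {n k : ℕ} (hs : UniqueDiffOn ℝ s) (hs0 : ∀ t ∈ s, t ≠ 0)
    (hx : ContDiffOn ℝ n x s) (hk : k ≤ n) :
    ContDiffOn ℝ (n - k : ℕ) (iterDWithin ρ s x k) s := by
  induction k with
  | zero => simpa [iterDWithin] using hx
  | succ k ih =>
    have hderiv : ContDiffOn ℝ (n - (k + 1) : ℕ) (derivWithin (iterDWithin ρ s x k) s) s := by
      refine (ih (by omega)).derivWithin hs ?_
      exact_mod_cast (by omega : n - (k + 1) + 1 ≤ n - k)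
    exact (contDiffOn_fun_id.rpow_const_of_ne hs0).mul hderiv

end IteratedDerivative

theorem bddAbove_abs_iterD_image {ρ a b : ℝ} {x : ℝ → ℝ} {n k : ℕ} (ha : 0 < a) (hab : a < b)
    (hx : ContDiffOn ℝ n x (Icc a b)) (hk : k ≤ n) :
    BddAbove ((fun t => |iterD ρ x k t|) '' Icc a b) := by
  have hcont : ContinuousOn (iterDWithin ρ (Icc a b) x k) (Icc a b) :=
    (contDiffOn_iterDWithin (uniqueDiffOn_Icc hab) (fun t ht => (ha.trans_le ht.1).ne') hx
      hk).continuousOn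
  have hIoo : BddAbove ((fun t => |iterD ρ x k t|) '' Ioo a b) := by
    refine (isCompact_Icc.bddAbove_image hcont.abs).mono ?_
    rintro _ ⟨t, ht, rfl⟩
    exact ⟨t, Ioo_subset_Icc_self ht,
      congrArg abs (iterD_eq_iterDWithin k (by rwa [interior_Icc])).symm⟩
  rw [← Ico_insert_right hab.le, ← Ioo_insert_left hab, image_insert_eq, image_insert_eq]
  exact (hIoo.insert _).insert _

theorem caputoKatLeft_eq_katIntLeft (a ρ α : ℝ) (n : ℕ) (x : ℝ → ℝ) :
    caputoKatLeft a ρ α n x = katIntLeft a ρ (n - α) (iterD ρ x n) := by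
  ext t
  rw [caputoKatLeft, katIntLeft, show 1 - (n : ℝ) + α = 1 - (n - α) by ring]

theorem caputoKatRight_eq_katIntRight (b ρ α : ℝ) (n : ℕ) (x : ℝ → ℝ) :
    caputoKatRight b ρ α n x = katIntRight b ρ (n - α) fun τ => (-1) ^ n * iterD ρ x n τ := by
  ext t
  rw [caputoKatRight, katIntRight, show 1 - (n : ℝ) + α = 1 - (n - α) by ring]

theorem caputoKat_bounded_operator_general
    (a b ρ α : ℝ) (n : ℕ) (ha : 0 < a) (hab : a < b) (hρ : 0 < ρ)
    (hα₂ : α < n)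
    (K : ℝ) (hK : K = ρ ^ (α - (n : ℝ)) / Real.Gamma ((n : ℝ) + 1 - α) *
      (b ^ ρ - a ^ ρ) ^ ((n : ℝ) - α))
    (x : ℝ → ℝ) (hx : ContDiffOn ℝ n x (Set.Icc a b)) :
    sSup ((fun t => |caputoKatLeft a ρ α n x t|) '' Set.Icc a b) ≤
      K * ∑ k ∈ Finset.range (n + 1), sSup ((fun t => |iterD ρ x k t|) '' Set.Icc a b) ∧
    sSup ((fun t => |caputoKatRight b ρ α n x t|) '' Set.Icc a b) ≤
      K * ∑ k ∈ Finset.range (n + 1), sSup ((fun t => |iterD ρ x k t|) '' Set.Icc a b) := by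
  have hβ : 0 < (n : ℝ) - α := sub_pos.2 hα₂
  set M : ℕ → ℝ := fun k => sSup ((fun t => |iterD ρ x k t|) '' Icc a b)
  have hM : ∀ k ≤ n, ∀ t ∈ Icc a b, |iterD ρ x k t| ≤ M k := fun k hk t ht =>
    le_csSup (bddAbove_abs_iterD_image ha hab hx hk) (mem_image_of_mem _ ht)
  have hMn : M n ≤ ∑ k ∈ Finset.range (n + 1), M k :=
    Finset.single_le_sum (fun k hk => (abs_nonneg _).trans
        (hM k (Nat.lt_succ_iff.1 (Finset.mem_range.1 hk)) a (left_mem_Icc.2 hab.le)))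
      (Finset.self_mem_range_succ n)
  have hK' : K = ρ ^ (-((n : ℝ) - α)) / Real.Gamma ((n : ℝ) - α + 1) *
      (b ^ ρ - a ^ ρ) ^ ((n : ℝ) - α) := by
    rw [hK, neg_sub, sub_add_eq_add_sub]
  have hK0 : 0 ≤ K := by
    rw [hK']
    exact mul_nonneg (div_nonneg (Real.rpow_nonneg hρ.le _)
      (Real.Gamma_pos_of_pos (by linarith)).le)
      (Real.rpow_nonneg (sub_nonneg.2 (Real.rpow_le_rpow ha.le hab.le hρ.le)) _)
  have hsSup_le : ∀ g : ℝ → ℝ, (∀ t ∈ Icc a b, |g t| ≤ K * M n) →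
      sSup ((fun t => |g t|) '' Icc a b) ≤ K * ∑ k ∈ Finset.range (n + 1), M k :=
    fun g hg => csSup_le ((nonempty_Icc.2 hab.le).image _) <| forall_mem_image.2 fun t ht =>
      (hg t ht).trans (mul_le_mul_of_nonneg_left hMn hK0)
  refine ⟨hsSup_le _ fun t ht => ?_, hsSup_le _ fun t ht => ?_⟩
  · rw [caputoKatLeft_eq_katIntLeft, hK']
    exact abs_katIntLeft_le ha hρ hβ (hM n le_rfl) ht
  · rw [caputoKatRight_eq_katIntRight, hK']
    refine abs_katIntRight_le ha hρ hβ (fun τ hτ => ?_) ht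
    rw [abs_mul, abs_neg_one_pow, one_mul]
    exact hM n le_rfl τ hτ

theorem caputoKat_bounded_operator
    (a b ρ α : ℝ) (n : ℕ) (ha : 0 < a) (hab : a < b) (hρ : 0 < ρ)
    (hα₁ : (n : ℝ) - 1 < α) (hα₂ : α < n)
    (K : ℝ) (hK : K = ρ ^ (α - (n : ℝ)) / Real.Gamma ((n : ℝ) + 1 - α) *
      (b ^ ρ - a ^ ρ) ^ ((n : ℝ) - α))
    (x : ℝ → ℝ) (hx : ContDiffOn ℝ n x (Set.Icc a b)) :
    sSup ((fun t => |caputoKatLeft a ρ α n x t|) '' Set.Icc a b) ≤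
      K * ∑ k ∈ Finset.range (n + 1), sSup ((fun t => |iterD ρ x k t|) '' Set.Icc a b) ∧
    sSup ((fun t => |caputoKatRight b ρ α n x t|) '' Set.Icc a b) ≤
      K * ∑ k ∈ Finset.range (n + 1), sSup ((fun t => |iterD ρ x k t|) '' Set.Icc a b) :=
  caputoKat_bounded_operator_general a b ρ α n ha hab hρ hα₂ K hK x hx
end
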